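/- Let p = 4k+3 be a prime and R a commutative ring of characteristic 2. For i = 0,1,2 let a_i, b_i, c_i ∈ R, set Q_i = Q_p(a_i,b_i,c_i), let A_0, A_1, A_2 be p×p circulant matrices over R, and let M be the 3p×6p block matrix with block rows (Q_0 Q_1 Q_2 | A_0 A_1 A_2), (Q_2 Q_0 Q_1 | A_2 A_0 A_1), (Q_1 Q_2 Q_0 | A_1 A_2 A_0). Then the code C generated by the rows of M is self-orthogonal if and only if both: (1) Σ_{i=0}^{2} A_i A_i^T = Q_p( Σ_{i=0}^{2} (a_i^2 + b_i^2 + c_i^2) , Σ_{i=0}^{2} (a_i b_i + a_i c_i + b_i c_i + k(b_i^2 + c_i^2)) , Σ_{i=0}^{2} (a_i b_i + a_i c_i + b_i c_i + k(b_i^2 + c_i^2)) ); and (2) Σ_{i=0}^{2} A_i A_{[i+2]_3}^T = Q_p( Σ_{i=0}^{2} ( a_i a_{[i+2]_3} + b_i b_{[i+2]_3} + c_i c_{[i+2]_3} ) , Σ_{i=0}^{2} ( a_i c_{[i+2]_3} + b_i a_{[i+2]_3} + k (b_i b_{[i+2]_3} + c_i c_{[i+2]_3}) + k b_i c_{[i+2]_3}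 + (k+1) c_i b_{[i+2]_3} ) , Σ_{i=0}^{2} ( a_i b_{[i+2]_3} + c_i a_{[i+2]_3} + k (b_i b_{[i+2]_3} + c_i c_{[i+2]_3}) + (k+1) b_i c_{[i+2]_3} + k c_i b_{[i+2]_3} ) ). -/

import Mathlib

open Matrix
open scoped Classical

/-- The quadratic residue circulant matrix `Q_p(a,b,c)`: the `p × p` matrix over `R`,
indexed by `ZMod p`, whose `(i,j)` entry is `a` if `i = j`, `b` if `j - i` is a
nonzero quadratic residue modulo `p`, and `c` otherwise. -/
noncomputable def Qmat (p : ℕ) {R : Type*} [CommRing R] (a b c : R) :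
    Matrix (ZMod p) (ZMod p) R :=
  Matrix.of fun i j => if i = j then a else if IsSquare (j - i) then b else c

/-- The `3×3` block circulant matrix `CIRC(B 0, B 1, B 2)` whose block rows are
`(B 0, B 1, B 2)`, `(B 2, B 0, B 1)`, `(B 1, B 2, B 0)`. -/
def blockCirc {R n : Type*} (B : ZMod 3 → Matrix n n R) :
    Matrix (ZMod 3 × n) (ZMod 3 × n) R :=
  Matrix.of fun ix jy => B (jy.1 - ix.1) ix.2 jy.2

/-- The `3p × 6p` block matrix with block rows `(Q 0, Q 1, Q 2 | A 0, A 1, A 2)`,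
`(Q 2, Q 0, Q 1 | A 2, A 0, A 1)`, `(Q 1, Q 2, Q 0 | A 1, A 2, A 0)`. -/
def Mblk {R n : Type*} (Q A : ZMod 3 → Matrix n n R) :
    Matrix (ZMod 3 × n) ((ZMod 3 × n) ⊕ (ZMod 3 × n)) R :=
  Matrix.fromCols (blockCirc Q) (blockCirc A)

open Finset

/-!
Write `Q_p(a,b,c) = a • 1 + b • S + c • N`, where `S` and `N` are the `0/1` matrices of nonzero
residue and nonresidue differences, and let `J = 1 + S + N` be the all-ones matrix. As
`p ≡ 3 (mod 4)`, `-1` is a nonresidue, so `Sᵀ = N`. The Jacobi sum of the quadratic character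
with itself is `-χ(-1)`, which makes any two distinct points have exactly `k` common residue
differences: `S Sᵀ = (k + 1) • 1 + k • J`. With `S J = (2k + 1) • J` this determines every product
of `S` and `N`, so `Q_p(a,b,c) Q_p(a',b',c')ᵀ` is again a quadratic residue matrix with explicit
coefficients.

The Gram matrix `M Mᵀ` of the rows of `M` is block circulant with blocks
`∑ i, Q i * (Q (i + d))ᵀ + ∑ i, A i * (A (i + d))ᵀ`. In characteristic `2` it vanishes iff the
two sums agree for every `d`, and the condition for `d = 1` is the transpose of the one for
`d = 2`.
-/

section QuadraticChar

variable {F : Type*} [Field F] [Fintype F]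

theorem ringChar_ne_two_of_card_mod_four (hF : Fintype.card F % 4 = 3) : ringChar F ≠ 2 :=
  fun h => by have := FiniteField.even_card_iff_char_two.1 h; omega

theorem quadraticChar_neg_one_of_card_mod_four [DecidableEq F] (hF : Fintype.card F % 4 = 3) :
    quadraticChar F (-1) = -1 :=
  quadraticChar_neg_one_iff_not_isSquare.2 fun h => FiniteField.isSquare_neg_one_iff.1 h hF

theorem isSquare_neg_iff_not_isSquare (hF : Fintype.card F % 4 = 3) {x : F} (hx : x ≠ 0) :
    IsSquare (-x) ↔ ¬IsSquare x := by
  classical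
  rw [← quadraticChar_one_iff_isSquare (neg_ne_zero.2 hx), ← quadraticChar_neg_one_iff_not_isSquare,
    neg_eq_neg_one_mul, map_mul, quadraticChar_neg_one_of_card_mod_four hF]
  omega

variable [DecidableEq F]

local notation "χ" => quadraticChar F

theorem quadraticChar_sum_mul_sub (hF : ringChar F ≠ 2) {s : F} (hs : s ≠ 0) :
    ∑ t, χ t * χ (t - s) = -1 := by
  have hJ : jacobiSum χ χ = -χ (-1) := by
    simpa only [(quadraticChar_isQuadratic F).inv] using
      jacobiSum_nontrivial_inv (quadraticChar_ne_one hF)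
  calc ∑ t, χ t * χ (t - s) = ∑ u, χ (s * u) * χ (s * u - s) :=
        (Fintype.sum_bijective _ (mulLeft_bijective₀ s hs) _ _ fun _ => rfl).symm
    _ = ∑ u, χ (-1) * (χ u * χ (1 - u)) := by
        refine sum_congr rfl fun u _ => ?_
        rw [show s * u - s = -1 * s * (1 - u) by ring, map_mul, map_mul, map_mul]
        linear_combination (χ (-1) * χ u * χ (1 - u)) * quadraticChar_sq_one hs
    _ = -1 := by
        rw [← mul_sum, ← jacobiSum, hJ, mul_neg, ← sq,
          quadraticChar_sq_one (neg_ne_zero.2 one_ne_zero)]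

theorem two_mul_card_quadraticChar_eq_one_add_one (hF : ringChar F ≠ 2) :
    2 * #{t | χ t = 1} + 1 = Fintype.card F := by
  have hpoint : ∀ t, 1 + χ t = 2 * (if χ t = 1 then 1 else 0) + if t = 0 then 1 else 0 := by
    intro t
    rcases eq_or_ne t 0 with rfl | ht
    · simp
    · rcases quadraticChar_dichotomy ht with h | h <;> simp [h, ht]
  zify
  calc 2 * (#{t | χ t = 1} : ℤ) + 1
      = ∑ t, (2 * (if χ t = 1 then 1 else 0) + if t = 0 then 1 else 0) := by
        rw [sum_add_distrib, ← mul_sum, sum_boole, sum_ite_eq' univ (0 : F)]; simp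
    _ = Fintype.card F := by
        rw [← Fintype.sum_congr _ _ hpoint, sum_add_distrib, quadraticChar_sum_zero hF]; simp

theorem four_mul_card_quadraticChar_eq_one_and_sub_add_three (hF : Fintype.card F % 4 = 3)
    {s : F} (hs : s ≠ 0) :
    4 * #{t | χ t = 1 ∧ χ (t - s) = 1} + 3 = Fintype.card F := by
  have hF2 := ringChar_ne_two_of_card_mod_four hF
  have hpoint : ∀ t, (1 + χ t) * (1 + χ (t - s)) = 4 * (if χ t = 1 ∧ χ (t - s) = 1 then 1 else 0)
      + (if t = 0 then 1 + χ (-s) else 0) + (if t = s then 1 + χ s else 0) := by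
    intro t
    rcases eq_or_ne t 0 with rfl | ht
    · simp [hs.symm]
    rcases eq_or_ne t s with rfl | hts
    · simp [ht]
    rcases quadraticChar_dichotomy ht with h | h <;>
      rcases quadraticChar_dichotomy (sub_ne_zero.2 hts) with h' | h' <;> simp [h, h', ht, hts]
  have hshift : ∑ t, χ (t - s) = 0 := by
    rw [← quadraticChar_sum_zero hF2]
    exact (Equiv.subRight s).sum_comp _
  have hneg : χ (-s) = -χ s := by
    rw [neg_eq_neg_one_mul, map_mul, quadraticChar_neg_one_of_card_mod_four hF, neg_one_mul]
  have hsum := Fintype.sum_congr _ _ hpoint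
  simp only [sum_add_distrib, ← mul_sum, sum_boole, sum_ite_eq', mem_univ, if_true,
    add_mul, mul_add, one_mul, mul_one, sum_const, card_univ, quadraticChar_sum_zero hF2,
    hshift, quadraticChar_sum_mul_sub hF2 hs, hneg] at hsum
  zify
  linear_combination -hsum

end QuadraticChar

section ResidueMatrices

variable {p : ℕ} {R : Type*} [CommRing R]

noncomputable def residueMat (p : ℕ) (R : Type*) [CommRing R] : Matrix (ZMod p) (ZMod p) R :=
  Qmat p 0 1 0

noncomputable def nonresidueMat (p : ℕ) (R : Type*) [CommRing R] : Matrix (ZMod p) (ZMod p) R :=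
  Qmat p 0 0 1

theorem Qmat_eq_smul_add (a b c : R) :
    Qmat p a b c = a • 1 + b • residueMat p R + c • nonresidueMat p R := by
  ext i j
  simp only [Qmat, residueMat, nonresidueMat, of_apply, Matrix.add_apply, Matrix.smul_apply,
    one_apply, smul_eq_mul]
  split_ifs <;> simp

theorem Qmat_sum {ι : Type*} (s : Finset ι) (x y z : ι → R) :
    ∑ i ∈ s, Qmat p (x i) (y i) (z i) = Qmat p (∑ i ∈ s, x i) (∑ i ∈ s, y i) (∑ i ∈ s, z i) := by
  simp only [Qmat_eq_smul_add, sum_add_distrib, sum_smul]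

theorem one_add_residueMat_add_nonresidueMat :
    1 + residueMat p R + nonresidueMat p R = of fun _ _ => 1 := by
  rw [← one_smul R 1, ← one_smul R (residueMat p R), ← one_smul R (nonresidueMat p R),
    ← Qmat_eq_smul_add]
  ext i j
  simp only [Qmat, of_apply]
  split_ifs <;> rfl

theorem Qmat_eq_circulant (a b c : R) : Qmat p a b c = circulant fun d => Qmat p a b c d 0 := by
  ext i j
  simp only [Qmat, of_apply, circulant_apply, sub_eq_zero, zero_sub, neg_sub]

variable [Fact p.Prime]

theorem transpose_residueMat_mul_residueMat :
    (residueMat p R)ᵀ * residueMat p R = residueMat p R * (residueMat p R)ᵀ := by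
  rw [residueMat, Qmat_eq_circulant, transpose_circulant, circulant_mul_comm]

theorem residueMat_apply (i j : ZMod p) :
    residueMat p R i j = if quadraticChar (ZMod p) (j - i) = 1 then 1 else 0 := by
  rcases eq_or_ne i j with rfl | h
  · simp [residueMat, Qmat]
  · simp only [residueMat, Qmat, of_apply, if_neg h]
    congr 1
    exact propext (quadraticChar_one_iff_isSquare (sub_ne_zero.2 h.symm)).symm

theorem transpose_residueMat (hp : p % 4 = 3) : (residueMat p R)ᵀ = nonresidueMat p R := by
  ext i j
  rcases eq_or_ne i j with rfl | h
  · simp [residueMat, nonresidueMat, Qmat]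
  · have hp' : Fintype.card (ZMod p) % 4 = 3 := by rwa [ZMod.card]
    have hsq := isSquare_neg_iff_not_isSquare hp' (sub_ne_zero.2 h.symm)
    rw [neg_sub] at hsq
    simp [residueMat, nonresidueMat, Qmat, h, Ne.symm h, hsq]

theorem transpose_nonresidueMat (hp : p % 4 = 3) : (nonresidueMat p R)ᵀ = residueMat p R := by
  rw [← transpose_residueMat hp, transpose_transpose]

variable {k : ℕ}

theorem residueMat_mul_transpose (hpk : p = 4 * k + 3) :
    residueMat p R * (residueMat p R)ᵀ = ((k : R) + 1) • 1 + (k : R) • of fun _ _ => 1 := by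
  ext i j
  rw [mul_apply, ← Equiv.sum_comp (Equiv.addRight i)]
  simp only [transpose_apply, residueMat_apply, ite_zero_mul_ite_zero, mul_one,
    Equiv.coe_addRight, add_sub_cancel_right, ← sub_sub_eq_add_sub, sum_boole]
  rcases eq_or_ne i j with rfl | h
  · have hcard := two_mul_card_quadraticChar_eq_one_add_one (F := ZMod p)
      (by rw [ZMod.ringChar_zmod_n]; omega)
    rw [ZMod.card] at hcard
    simp only [sub_self, sub_zero, and_self]
    rw [show #{u : ZMod p | quadraticChar (ZMod p) u = 1} = 2 * k + 1 by omega]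
    simp only [Nat.cast_add, Nat.cast_mul, Nat.cast_ofNat, Nat.cast_one, Matrix.add_apply,
      Matrix.smul_apply, one_apply_eq, of_apply, smul_eq_mul, mul_one]
    ring
  · have hcard := four_mul_card_quadraticChar_eq_one_and_sub_add_three (F := ZMod p)
      (by rw [ZMod.card]; omega) (sub_ne_zero.2 h.symm)
    rw [ZMod.card] at hcard
    rw [show #{u : ZMod p | _} = k by omega]
    simp [h]

theorem residueMat_mul_allOnes (hpk : p = 4 * k + 3) :
    residueMat p R * (of fun _ _ => 1) = (2 * (k : R) + 1) • of fun _ _ => 1 := by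
  ext i j
  rw [mul_apply, ← Equiv.sum_comp (Equiv.addRight i)]
  simp only [residueMat_apply, of_apply, mul_one, Equiv.coe_addRight, add_sub_cancel_right,
    sum_boole]
  have hcard := two_mul_card_quadraticChar_eq_one_add_one (F := ZMod p)
    (by rw [ZMod.ringChar_zmod_n]; omega)
  rw [ZMod.card] at hcard
  rw [show #{u : ZMod p | quadraticChar (ZMod p) u = 1} = 2 * k + 1 by omega]
  simp

theorem residueMat_mul_nonresidueMat (hpk : p = 4 * k + 3) :
    residueMat p R * nonresidueMat p R
      = (2 * (k : R) + 1) • 1 + (k : R) • (residueMat p R + nonresidueMat p R) := by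
  calc residueMat p R * nonresidueMat p R = residueMat p R * (residueMat p R)ᵀ := by
        rw [transpose_residueMat (by omega)]
    _ = _ := by
        rw [residueMat_mul_transpose hpk, ← one_add_residueMat_add_nonresidueMat]
        module

theorem nonresidueMat_mul_residueMat (hpk : p = 4 * k + 3) :
    nonresidueMat p R * residueMat p R
      = (2 * (k : R) + 1) • 1 + (k : R) • (residueMat p R + nonresidueMat p R) := by
  rw [← residueMat_mul_nonresidueMat hpk, ← transpose_residueMat (R := R) (by omega),
    transpose_residueMat_mul_residueMat]

theorem residueMat_mul_self (hpk : p = 4 * k + 3) :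
    residueMat p R * residueMat p R
      = (k : R) • residueMat p R + ((k : R) + 1) • nonresidueMat p R := by
  have h := residueMat_mul_allOnes (R := R) hpk
  rw [← one_add_residueMat_add_nonresidueMat, mul_add, mul_add, mul_one,
    residueMat_mul_nonresidueMat hpk] at h
  linear_combination (norm := module) h

theorem nonresidueMat_mul_self (hpk : p = 4 * k + 3) :
    nonresidueMat p R * nonresidueMat p R
      = (k : R) • nonresidueMat p R + ((k : R) + 1) • residueMat p R := by
  rw [← transpose_residueMat (by omega), ← transpose_mul, residueMat_mul_self hpk,
    transpose_add, transpose_smul, transpose_smul, transpose_nonresidueMat (by omega)]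

theorem Qmat_mul_transpose_Qmat (hpk : p = 4 * k + 3) (a b c a' b' c' : R) :
    Qmat p a b c * (Qmat p a' b' c')ᵀ
      = Qmat p (a * a' + (2 * k + 1) * (b * b' + c * c'))
          (a * c' + b * a' + k * (b * b' + c * c') + k * (b * c') + (k + 1) * (c * b'))
          (a * b' + c * a' + k * (b * b' + c * c') + (k + 1) * (b * c') + k * (c * b')) := by
  simp only [Qmat_eq_smul_add, transpose_add, transpose_smul, transpose_one,
    transpose_residueMat (R := R) (show p % 4 = 3 by omega),
    transpose_nonresidueMat (R := R) (show p % 4 = 3 by omega), add_mul, mul_add,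
    smul_mul_smul_comm, one_mul, mul_one, residueMat_mul_nonresidueMat hpk,
    nonresidueMat_mul_residueMat hpk, residueMat_mul_self hpk, nonresidueMat_mul_self hpk]
  module

end ResidueMatrices

section BlockCirculant

variable {R : Type*} [CommRing R]

theorem forall_mem_span_rows_dotProduct_eq_zero_iff {m n : Type*} [Fintype n]
    (M : Matrix m n R) :
    (∀ x ∈ Submodule.span R (Set.range M), ∀ y ∈ Submodule.span R (Set.range M), x ⬝ᵥ y = 0) ↔
      M * Mᵀ = 0 := by
  refine ⟨fun h => ext fun i j => h _ (Submodule.subset_span ⟨i, rfl⟩) _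
    (Submodule.subset_span ⟨j, rfl⟩), fun h x hx y hy => ?_⟩
  induction hx, hy using Submodule.span_induction₂ with
  | mem_mem x y hx hy =>
    obtain ⟨i, rfl⟩ := hx
    obtain ⟨j, rfl⟩ := hy
    exact congrFun (congrFun h i) j
  | zero_left => exact zero_dotProduct _
  | zero_right => exact dotProduct_zero _
  | add_left _ _ _ _ _ _ h₁ h₂ => rw [add_dotProduct, h₁, h₂, add_zero]
  | add_right _ _ _ _ _ _ h₁ h₂ => rw [dotProduct_add, h₁, h₂, add_zero]
  | smul_left _ _ _ _ _ h => rw [smul_dotProduct, h, smul_zero]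
  | smul_right _ _ _ _ _ h => rw [dotProduct_smul, h, smul_zero]

variable {n : Type*} [Fintype n]

def autocorrelation {G : Type*} [AddCommGroup G] [Fintype G] (B : G → Matrix n n R) (d : G) :
    Matrix n n R :=
  ∑ u, B u * (B (u + d))ᵀ

theorem transpose_autocorrelation {G : Type*} [AddCommGroup G] [Fintype G]
    (B : G → Matrix n n R) (d : G) : (autocorrelation B d)ᵀ = autocorrelation B (-d) := by
  simp only [autocorrelation, transpose_sum, transpose_mul, transpose_transpose]
  exact Fintype.sum_equiv (Equiv.addRight d) _ _ fun u => by simp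

theorem blockCirc_mul_transpose_self (B : ZMod 3 → Matrix n n R) :
    blockCirc B * (blockCirc B)ᵀ = blockCirc fun d => autocorrelation B (-d) := by
  ext ⟨r, x⟩ ⟨s, y⟩
  simp only [blockCirc, autocorrelation, mul_apply, of_apply, transpose_apply, Matrix.sum_apply,
    Fintype.sum_prod_type]
  refine Fintype.sum_equiv (Equiv.subRight r) _ _ fun t => ?_
  simp only [Equiv.subRight_apply, neg_sub, sub_add_sub_cancel]

omit [Fintype n] in
theorem blockCirc_add (B C : ZMod 3 → Matrix n n R) :
    blockCirc B + blockCirc C = blockCirc (B + C) :=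
  rfl

omit [Fintype n] in
theorem blockCirc_eq_zero_iff (B : ZMod 3 → Matrix n n R) : blockCirc B = 0 ↔ ∀ d, B d = 0 := by
  refine ⟨fun h d => ext fun x y => ?_, fun h => ?_⟩
  · simpa [blockCirc] using congrFun (congrFun h (0, x)) (d, y)
  · ext
    simp [blockCirc, h]

theorem Mblk_mul_transpose_self_eq_zero_iff (Q A : ZMod 3 → Matrix n n R) :
    Mblk Q A * (Mblk Q A)ᵀ = 0 ↔ ∀ d, autocorrelation Q d + autocorrelation A d = 0 := by
  rw [Mblk, transpose_fromCols, fromCols_mul_fromRows, blockCirc_mul_transpose_self,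
    blockCirc_mul_transpose_self, blockCirc_add, blockCirc_eq_zero_iff]
  exact ⟨fun h d => by simpa using h (-d), fun h d => h (-d)⟩

theorem forall_autocorrelation_eq_iff (B C : ZMod 3 → Matrix n n R) :
    (∀ d, autocorrelation B d = autocorrelation C d) ↔
      autocorrelation B 0 = autocorrelation C 0 ∧ autocorrelation B 2 = autocorrelation C 2 := by
  refine ⟨fun h => ⟨h 0, h 2⟩, fun ⟨h0, h2⟩ d => ?_⟩
  obtain rfl | rfl | rfl : d = 0 ∨ d = 1 ∨ d = 2 := by revert d; decide
  · exact h0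
  · rw [show (1 : ZMod 3) = -2 from rfl, ← transpose_autocorrelation, ← transpose_autocorrelation,
      h2]
  · exact h2

end BlockCirculant

theorem stmt7_general {R : Type*} [CommRing R] [CharP R 2] (p k : ℕ) [Fact (Nat.Prime p)]
    (hpk : p = 4 * k + 3) (a b c : ZMod 3 → R)
    (A : ZMod 3 → Matrix (ZMod p) (ZMod p) R) :
    (∀ x ∈ Submodule.span R
        (Set.range fun i => Mblk (fun i => Qmat p (a i) (b i) (c i)) A i),
      ∀ y ∈ Submodule.span R
        (Set.range fun i => Mblk (fun i => Qmat p (a i) (b i) (c i)) A i),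
        dotProduct x y = 0) ↔
      (∑ i : ZMod 3, A i * (A i)ᵀ =
        Qmat p (∑ i : ZMod 3, ((a i) ^ 2 + (b i) ^ 2 + (c i) ^ 2))
          (∑ i : ZMod 3, (a i * b i + a i * c i + b i * c i + (k : R) * ((b i) ^ 2 + (c i) ^ 2)))
          (∑ i : ZMod 3, (a i * b i + a i * c i + b i * c i +
            (k : R) * ((b i) ^ 2 + (c i) ^ 2))) ∧
       ∑ i : ZMod 3, A i * (A (i + 2))ᵀ =
        Qmat p (∑ i : ZMod 3, (a i * a (i + 2) + b i * b (i + 2) + c i * c (i + 2)))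
          (∑ i : ZMod 3, (a i * c (i + 2) + b i * a (i + 2) +
            (k : R) * (b i * b (i + 2) + c i * c (i + 2)) + (k : R) * (b i * c (i + 2)) +
            ((k : R) + 1) * (c i * b (i + 2))))
          (∑ i : ZMod 3, (a i * b (i + 2) + c i * a (i + 2) +
            (k : R) * (b i * b (i + 2) + c i * c (i + 2)) + ((k : R) + 1) * (b i * c (i + 2)) +
            (k : R) * (c i * b (i + 2))))) := by
  have h2 : (2 : R) = 0 := CharTwo.two_eq_zero
  refine (forall_mem_span_rows_dotProduct_eq_zero_iff _).trans ?_
  simp only [Mblk_mul_transpose_self_eq_zero_iff, CharTwo.add_eq_zero]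
  rw [forall_autocorrelation_eq_iff]
  simp only [autocorrelation, add_zero, Qmat_mul_transpose_Qmat hpk, Qmat_sum]
  refine and_congr (eq_comm.trans (Eq.congr_right ?_)) (eq_comm.trans (Eq.congr_right ?_)) <;>
    congr 1 <;> refine sum_congr rfl fun i _ => ?_
  · linear_combination k * (b i ^ 2 + c i ^ 2) * h2
  · linear_combination k * b i * c i * h2
  · linear_combination k * b i * c i * h2
  · linear_combination k * (b i * b (i + 2) + c i * c (i + 2)) * h2

theorem stmt7 {R : Type*} [CommRing R] [CharP R 2] (p k : ℕ) [Fact (Nat.Prime p)]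
    (hpk : p = 4 * k + 3) (a b c : ZMod 3 → R)
    (A : ZMod 3 → Matrix (ZMod p) (ZMod p) R)
    (hA : ∀ i, ∃ v : ZMod p → R, A i = Matrix.circulant v) :
    (∀ x ∈ Submodule.span R
        (Set.range fun i => Mblk (fun i => Qmat p (a i) (b i) (c i)) A i),
      ∀ y ∈ Submodule.span R
        (Set.range fun i => Mblk (fun i => Qmat p (a i) (b i) (c i)) A i),
        dotProduct x y = 0) ↔
      (∑ i : ZMod 3, A i * (A i)ᵀ =
        Qmat p (∑ i : ZMod 3, ((a i) ^ 2 + (b i) ^ 2 + (c i) ^ 2))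
          (∑ i : ZMod 3, (a i * b i + a i * c i + b i * c i + (k : R) * ((b i) ^ 2 + (c i) ^ 2)))
          (∑ i : ZMod 3, (a i * b i + a i * c i + b i * c i +
            (k : R) * ((b i) ^ 2 + (c i) ^ 2))) ∧
       ∑ i : ZMod 3, A i * (A (i + 2))ᵀ =
        Qmat p (∑ i : ZMod 3, (a i * a (i + 2) + b i * b (i + 2) + c i * c (i + 2)))
          (∑ i : ZMod 3, (a i * c (i + 2) + b i * a (i + 2) +
            (k : R) * (b i * b (i + 2) + c i * c (i + 2)) + (k : R) * (b i * c (i + 2)) +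
            ((k : R) + 1) * (c i * b (i + 2))))
          (∑ i : ZMod 3, (a i * b (i + 2) + c i * a (i + 2) +
            (k : R) * (b i * b (i + 2) + c i * c (i + 2)) + ((k : R) + 1) * (b i * c (i + 2)) +
            (k : R) * (c i * b (i + 2))))) :=
  stmt7_general p k hpk a b c A
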